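/- Let A be an associative algebra, φ : A^{⊗p} → A a Hochschild cochain and τ : A^{⊗(q+1)} → K a cyclic cochain. Define φ̃(a_0,…,a_{p+q}) = τ(a_0 φ(a_1,…,a_p), a_{p+1},…,a_{p+q}). Then the pairing (φ, τ) ↦ φ̃ is a chain map: b(φ̃) corresponds to the pairing of the Hochschild coboundary δφ with τ whenever τ is a Hochschild cocycle; hence it induces a pairing H^p(A,A) ⊗ HH^q(A) → HH^{p+q}(A). -/

import Mathlib

/- STATEMENT 18: Let A be an associative algebra, φ : A^{⊗p} → A a Hochschild
cochain and τ : A^{⊗(q+1)} → K a cyclic (Hochschild) cochain.  Define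
φ̃(a_0,…,a_{p+q}) = τ(a_0·φ(a_1,…,a_p), a_{p+1},…,a_{p+q}).  Then (φ,τ) ↦ φ̃ is a
chain map: whenever τ is a Hochschild cocycle (bτ = 0), b(φ̃) is exactly the
pairing of the Hochschild coboundary δφ with τ; hence it induces a pairing
H^p(A,A) ⊗ HH^q(A) → HH^{p+q}(A) in cohomology. -/

noncomputable section

variable {K A : Type} [Field K] [Ring A] [Algebra K A]

/-- The pairing `ϕ̃` of an `A`-valued `p`-cochain `ϕ` with a `K`-valued
`(q+1)`-cochain `τ` : `ϕ̃(a_0,…,a_{p+q}) = τ(a_0·ϕ(a_1,…,a_p), a_{p+1},…,a_{p+q})`. -/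
def pairCochain (p q : ℕ) (ϕ : (Fin p → A) → A)
    (τ : MultilinearMap K (fun _ : Fin (q + 1) => A) K) :
    (Fin (p + q + 1) → A) → K := fun a =>
  τ (fun t : Fin (q + 1) =>
    if t.val = 0 then
      a ⟨0, by omega⟩ * ϕ (fun s : Fin p => a ⟨s.val + 1, by have := s.isLt; omega⟩)
    else a ⟨p + t.val, by have := t.isLt; omega⟩)

/-- The Hochschild coboundary `δϕ` of an `A`-valued `p`-cochain. -/
def hDelta (p : ℕ) (ϕ : (Fin p → A) → A) : (Fin (p + 1) → A) → A := fun a =>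
  a ⟨0, by omega⟩ * ϕ (fun s : Fin p => a ⟨s.val + 1, by have := s.isLt; omega⟩)
  + ∑ i ∈ Finset.range p,
      ((-1 : ℤ) ^ (i + 1)) •
        ϕ (fun s : Fin p =>
          if s.val < i then a ⟨s.val, by have := s.isLt; omega⟩
          else if s.val = i then
            a ⟨s.val, by have := s.isLt; omega⟩ * a ⟨s.val + 1, by have := s.isLt; omega⟩
          else a ⟨s.val + 1, by have := s.isLt; omega⟩)
  + ((-1 : ℤ) ^ (p + 1)) •
      (ϕ (fun s : Fin p => a ⟨s.val, by have := s.isLt; omega⟩) * a (Fin.last p))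

/-- The Hochschild boundary-type coboundary `b` of a `K`-valued `(r+1)`-cochain. -/
def hB (r : ℕ) (ψ : (Fin (r + 1) → A) → K) : (Fin (r + 2) → A) → K := fun a =>
  (∑ i ∈ Finset.range (r + 1),
    ((-1 : ℤ) ^ i) •
      ψ (fun s : Fin (r + 1) =>
        if s.val < i then a ⟨s.val, by have := s.isLt; omega⟩
        else if s.val = i then
          a ⟨s.val, by have := s.isLt; omega⟩ * a ⟨s.val + 1, by have := s.isLt; omega⟩
        else a ⟨s.val + 1, by have := s.isLt; omega⟩))
  + ((-1 : ℤ) ^ (r + 1)) •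
      ψ (fun s : Fin (r + 1) =>
        if s.val = 0 then a (Fin.last (r + 1)) * a ⟨0, by omega⟩
        else a ⟨s.val, by have := s.isLt; omega⟩)

/-!
Write `x = (a₀ φ(a₁,…,a_p), a_{p+1},…,a_{p+q+1})`. The faces `0,…,p` of `b φ̃` at `a` only merge
neighbours among `a₀,…,a_{p+1}`, and add up to `τ(a₀ (δφ)(a₁,…,a_{p+1}), a_{p+2},…)` except for
the last term of `δφ`, which contributes `τ(a₀ φ(a₁,…,a_p) a_{p+1}, a_{p+2},…)`: face `0` of `bτ`
at `x`. The remaining faces of `b φ̃`, the cyclic one included, are the faces `1,…,q+1` of `bτ`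
at `x`, with signs shifted by `(-1)^p`. Hence `b φ̃ (a) = (δφ)~(a) + (-1)^p (bτ)(x)` for every `τ`.
-/

section Faces

variable {M : Type*} {n p q : ℕ}

def face [Mul M] (a : Fin (n + 1) → M) (i : ℕ) : Fin n → M := fun s =>
  if s.val < i then a ⟨s.val, by omega⟩
  else if s.val = i then a ⟨s.val, by omega⟩ * a ⟨s.val + 1, by omega⟩
  else a ⟨s.val + 1, by omega⟩

def cyclicFace [Mul M] (a : Fin (n + 2) → M) : Fin (n + 1) → M := fun s =>
  if s.val = 0 then a (Fin.last (n + 1)) * a 0 else a s.castSucc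

def pairArgs [Mul M] (p q : ℕ) (ϕ : (Fin p → M) → M) (a : Fin (p + q + 1) → M) :
    Fin (q + 1) → M := fun t =>
  if t.val = 0 then a 0 * ϕ (fun s => a ⟨s.val + 1, by omega⟩) else a ⟨p + t.val, by omega⟩

def cochainArgs (p q : ℕ) (a : Fin (p + q + 2) → M) : Fin (p + 1) → M := fun s =>
  a ⟨s.val + 1, by omega⟩

/-- `(a_{p+1}, a_{p+2},…, a_{p+q+1})`; its entry `0` is always overwritten by `Function.update`. -/
def trailingArgs (p q : ℕ) (a : Fin (p + q + 2) → M) : Fin (q + 1) → M := fun t =>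
  a ⟨p + 1 + t.val, by omega⟩

theorem pairArgs_cast [Mul M] (ψ : (Fin (p + 1) → M) → M) (a : Fin (p + q + 2) → M) :
    pairArgs (p + 1) q ψ (fun t : Fin (p + 1 + q + 1) => a ⟨t.val, by omega⟩) =
      Function.update (trailingArgs p q a) 0 (a 0 * ψ (cochainArgs p q a)) := by
  refine Function.eq_update_iff.mpr ⟨rfl, fun t ht => ?_⟩
  simp [pairArgs, trailingArgs, Fin.val_ne_zero_iff.mpr ht]

theorem pairArgs_face_zero [Semigroup M] (ϕ : (Fin p → M) → M) (a : Fin (p + q + 2) → M) :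
    pairArgs p q ϕ (face a 0) = Function.update (trailingArgs p q a) 0
      (a 0 * (cochainArgs p q a 0 * ϕ (Fin.tail (cochainArgs p q a)))) := by
  refine Function.eq_update_iff.mpr ⟨?_, fun t ht => ?_⟩
  · simp [pairArgs, face, mul_assoc]; rfl
  · grind [pairArgs, face, trailingArgs]

theorem pairArgs_face_succ [Mul M] (ϕ : (Fin p → M) → M) (a : Fin (p + q + 2) → M) {i : ℕ}
    (hi : i < p) :
    pairArgs p q ϕ (face a (i + 1)) = Function.update (trailingArgs p q a) 0
      (a 0 * ϕ (face (cochainArgs p q a) i)) := by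
  refine Function.eq_update_iff.mpr ⟨?_, fun t ht => ?_⟩
  · simp [pairArgs, face]; rfl
  · grind [pairArgs, face, trailingArgs]

theorem face_pairArgs_zero [Semigroup M] (ϕ : (Fin p → M) → M) (a : Fin (p + q + 2) → M) :
    face (pairArgs p (q + 1) ϕ a) 0 = Function.update (trailingArgs p q a) 0
      (a 0 * (ϕ (Fin.init (cochainArgs p q a)) * cochainArgs p q a (Fin.last p))) := by
  refine Function.eq_update_iff.mpr ⟨?_, fun t ht => ?_⟩
  · simp [pairArgs, face, mul_assoc]; rfl
  · grind [pairArgs, face, trailingArgs]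

theorem pairArgs_face_add [Mul M] (ϕ : (Fin p → M) → M) (a : Fin (p + q + 2) → M) (j : ℕ) :
    pairArgs p q ϕ (face a (p + 1 + j)) = face (pairArgs p (q + 1) ϕ a) (j + 1) := by
  funext t
  grind [pairArgs, face]

theorem pairArgs_cyclicFace [Semigroup M] (ϕ : (Fin p → M) → M) (a : Fin (p + q + 2) → M) :
    pairArgs p q ϕ (cyclicFace a) = cyclicFace (pairArgs p (q + 1) ϕ a) := by
  funext t
  simp [pairArgs, cyclicFace, mul_assoc]
  grind

end Faces

theorem hB_apply {K A : Type} [Field K] [Ring A] (r : ℕ) (ψ : (Fin (r + 1) → A) → K)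
    (a : Fin (r + 2) → A) :
    hB r ψ a = ∑ i ∈ Finset.range (r + 1), ((-1 : ℤ) ^ i) • ψ (face a i)
      + ((-1 : ℤ) ^ (r + 1)) • ψ (cyclicFace a) := rfl

theorem hDelta_apply (p : ℕ) (ϕ : (Fin p → A) → A) (a : Fin (p + 1) → A) :
    hDelta p ϕ a = a 0 * ϕ (Fin.tail a)
      + ∑ i ∈ Finset.range p, ((-1 : ℤ) ^ (i + 1)) • ϕ (face a i)
      + ((-1 : ℤ) ^ (p + 1)) • (ϕ (Fin.init a) * a (Fin.last p)) := rfl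

theorem pairCochain_apply (p q : ℕ) (ϕ : (Fin p → A) → A)
    (τ : MultilinearMap K (fun _ : Fin (q + 1) => A) K) (a : Fin (p + q + 1) → A) :
    pairCochain p q ϕ τ a = τ (pairArgs p q ϕ a) := rfl

theorem hB_pairCochain (p q : ℕ) (ϕ : (Fin p → A) → A)
    (τ : MultilinearMap K (fun _ : Fin (q + 1) => A) K) (a : Fin (p + q + 2) → A) :
    hB (p + q) (pairCochain p q ϕ τ) a =
      pairCochain (p + 1) q (hDelta p ϕ) τ (fun t : Fin (p + 1 + q + 1) => a ⟨t.val, by omega⟩)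
        + ((-1 : ℤ) ^ p) • hB q (fun x => τ x) (pairArgs p (q + 1) ϕ a) := by
  set σ := τ.toLinearMap (trailingArgs p q a) 0
  have hσ (u : A) : τ (Function.update (trailingArgs p q a) 0 u) = σ u := rfl
  have hhead : ∑ i ∈ Finset.range p,
        ((-1 : ℤ) ^ (i + 1)) • τ (pairArgs p q ϕ (face a (i + 1))) =
      ∑ i ∈ Finset.range p, ((-1 : ℤ) ^ (i + 1)) • σ (a 0 * ϕ (face (cochainArgs p q a) i)) :=
    Finset.sum_congr rfl fun i hi => by
      rw [pairArgs_face_succ ϕ a (Finset.mem_range.mp hi), hσ]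
  have htail : ∑ j ∈ Finset.range q,
        ((-1 : ℤ) ^ (p + 1 + j)) • τ (pairArgs p q ϕ (face a (p + 1 + j))) =
      ((-1 : ℤ) ^ p) • ∑ j ∈ Finset.range q,
        ((-1 : ℤ) ^ (j + 1)) • τ (face (pairArgs p (q + 1) ϕ a) (j + 1)) := by
    rw [Finset.smul_sum]
    refine Finset.sum_congr rfl fun j _ => ?_
    rw [pairArgs_face_add, smul_smul, ← pow_add, Nat.add_right_comm, add_assoc]
  simp only [hB_apply, pairCochain_apply]
  rw [pairArgs_cast, hσ, hDelta_apply,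
    show Finset.range (p + q + 1) = Finset.range (p + 1 + q) by rw [Nat.add_right_comm],
    Finset.sum_range_add, Finset.sum_range_succ', Finset.sum_range_succ' _ q, htail, hhead,
    pairArgs_face_zero, pairArgs_cyclicFace, face_pairArgs_zero, hσ, hσ]
  simp only [mul_add, Finset.mul_sum, mul_smul_comm, map_add, map_sum, map_zsmul]
  module

theorem cup_pairing_is_chain_map (K A : Type) [Field K] [Ring A] [Algebra K A]
    (p q : ℕ)
    (φ : MultilinearMap K (fun _ : Fin p => A) A)
    (τ : MultilinearMap K (fun _ : Fin (q + 1) => A) K)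
    -- τ is a Hochschild cocycle: bτ = 0
    (hτ : ∀ a : Fin (q + 2) → A, hB q (fun x => τ x) a = 0) :
    -- b(φ̃) = (δφ)  ̃ (the pairing of δφ with τ)
    ∀ a : Fin (p + q + 2) → A,
      hB (p + q) (pairCochain p q (fun x => φ x) τ) a =
        pairCochain (p + 1) q (hDelta p (fun x => φ x)) τ
          (fun t : Fin (p + 1 + q + 1) => a ⟨t.val, by have := t.isLt; omega⟩) := by
  intro a
  rw [hB_pairCochain, hτ, smul_zero, add_zero]

end
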